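/- For every L ≥ 2, all real parameters λ, κ, Δ_t, a, b, c and all real couplings h₁,…,h_L and J₁,…,J_L, the Hamiltonian H(λ,κ) = λ Σ_{i=1}^{L} [(1−κ) h_i ((S^z)²)_i + κ J_i (S^z ⊗ S^z)_{i,i+1}] + Δ_t Σ_{i=1}^{L} [ a((S^+)²⊗(S^−)² + (S^−)²⊗(S^+)² + h.c.)_{i,i+1} + b((S^+S^z)⊗(S^−S^z) + (S^−S^z)⊗(S^+S^z) + h.c.)_{i,i+1} + c((S^+)²⊗(S^+S^z) + (S^−)²⊗(S^−S^z) + h.c.)_{i,i+1} ] on (ℂ³)^{⊗L} with periodic boundary conditions satisfies U(g) H(λ,κ) U(g)* = H(λ,κ) for U(g) = V(g)^{⊗L} with g = a and g = x, and hence for all g ∈ S₃. -/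

import Mathlib

open Matrix Complex Finset
open scoped Kronecker

noncomputable section

def ω : ℂ := Complex.exp (2 * Real.pi * Complex.I / 3)

def Va : Matrix (Fin 3) (Fin 3) ℂ := !![ω, 0, 0; 0, 1, 0; 0, 0, (starRingEnd ℂ) ω]

def Vx : Matrix (Fin 3) (Fin 3) ℂ := !![0, 0, 1; 0, -1, 0; 1, 0, 0]

def Sz : Matrix (Fin 3) (Fin 3) ℂ := !![1, 0, 0; 0, 0, 0; 0, 0, -1]

def Sx : Matrix (Fin 3) (Fin 3) ℂ :=
  ((Real.sqrt 2 : ℂ))⁻¹ • !![0, 1, 0; 1, 0, 1; 0, 1, 0]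

def Sy : Matrix (Fin 3) (Fin 3) ℂ :=
  ((Real.sqrt 2 : ℂ))⁻¹ • !![0, -Complex.I, 0; Complex.I, 0, -Complex.I; 0, Complex.I, 0]

def Sp : Matrix (Fin 3) (Fin 3) ℂ := ((Real.sqrt 2 : ℂ))⁻¹ • (Sx + Complex.I • Sy)

def Sm : Matrix (Fin 3) (Fin 3) ℂ := ((Real.sqrt 2 : ℂ))⁻¹ • (Sx - Complex.I • Sy)

/-- The site following `i` with periodic boundary conditions. -/
def nextSite {L : ℕ} (i : Fin L) : Fin L := ⟨(i + 1) % L, Nat.mod_lt _ i.pos⟩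

/-- `V^{⊗L}` acting on `(ℂ³)^{⊗L}`, realized as matrices indexed by `Fin L → Fin 3`. -/
def kronPow (L : ℕ) (V : Matrix (Fin 3) (Fin 3) ℂ) :
    Matrix (Fin L → Fin 3) (Fin L → Fin 3) ℂ :=
  fun f g => ∏ i, V (f i) (g i)

/-- `M_i`: one-site operator `M` on the `i`-th tensor factor, identity elsewhere. -/
def embed1 (L : ℕ) (M : Matrix (Fin 3) (Fin 3) ℂ) (i : Fin L) :
    Matrix (Fin L → Fin 3) (Fin L → Fin 3) ℂ :=
  fun f g => M (f i) (g i) * ∏ j ∈ Finset.univ \ {i}, (if f j = g j then (1 : ℂ) else 0)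

/-- `K_{i,i+1}`: two-site operator `K` on tensor factors `i`, `i+1` (periodic),
identity elsewhere. -/
def embed2 (L : ℕ) (K : Matrix (Fin 3 × Fin 3) (Fin 3 × Fin 3) ℂ) (i : Fin L) :
    Matrix (Fin L → Fin 3) (Fin L → Fin 3) ℂ :=
  fun f g => K (f i, f (nextSite i)) (g i, g (nextSite i)) *
    ∏ j ∈ Finset.univ \ {i, nextSite i}, (if f j = g j then (1 : ℂ) else 0)

/-- Two-site block `(S⁺)²⊗(S⁻)² + (S⁻)²⊗(S⁺)²` (to which h.c. is added below). -/
def Ta : Matrix (Fin 3 × Fin 3) (Fin 3 × Fin 3) ℂ :=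
  (Sp * Sp) ⊗ₖ (Sm * Sm) + (Sm * Sm) ⊗ₖ (Sp * Sp)

/-- Two-site block `(S⁺Sᶻ)⊗(S⁻Sᶻ) + (S⁻Sᶻ)⊗(S⁺Sᶻ)` (to which h.c. is added below). -/
def Tb : Matrix (Fin 3 × Fin 3) (Fin 3 × Fin 3) ℂ :=
  (Sp * Sz) ⊗ₖ (Sm * Sz) + (Sm * Sz) ⊗ₖ (Sp * Sz)

/-- Two-site block `(S⁺)²⊗(S⁺Sᶻ) + (S⁻)²⊗(S⁻Sᶻ)` (to which h.c. is added below). -/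
def Tc : Matrix (Fin 3 × Fin 3) (Fin 3 × Fin 3) ℂ :=
  (Sp * Sp) ⊗ₖ (Sp * Sz) + (Sm * Sm) ⊗ₖ (Sm * Sz)

/-- The model Hamiltonian `H(λ,κ)` of Eq. (5) on `(ℂ³)^{⊗L}` with periodic boundary
conditions. -/
def Hmodel (L : ℕ) (lam kap Δt a b c : ℝ) (h J : Fin L → ℝ) :
    Matrix (Fin L → Fin 3) (Fin L → Fin 3) ℂ :=
  (lam : ℂ) • (∑ i : Fin L,
      ((((1 - kap) * h i : ℝ) : ℂ) • embed1 L (Sz * Sz) i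
        + ((kap * J i : ℝ) : ℂ) • embed2 L (Sz ⊗ₖ Sz) i))
  + (Δt : ℂ) • (∑ i : Fin L,
      ((a : ℂ) • embed2 L (Ta + Taᴴ) i
        + (b : ℂ) • embed2 L (Tb + Tbᴴ) i
        + (c : ℂ) • embed2 L (Tc + Tcᴴ) i))

/-!
Conjugation by `U = V^{⊗L}` acts site by site: it sends `M_i` to `(V M V*)_i` and `K_{i,i+1}`
to `((V ⊗ V) K (V ⊗ V)*)_{i,i+1}` (first for `K = A ⊗ B`, then by linearity), so `H` is invariant
as soon as each local term is. `V(a) = exp(2πi Sᶻ/3)` fixes `Sᶻ` and multiplies `S^±` by `ω^{±1}`;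
in every bond term the phases of the two factors multiply to `ω⁰` or `ω^{±3}`, that is, to `1`.
`V(x)` is a spin flip, `Sᶻ ↦ -Sᶻ`, `S^± ↦ -S^∓`, which swaps the two summands of each bond term.
-/

namespace Matrix

section piKronecker

variable {ι n R : Type*} [Fintype ι] [CommSemiring R]

def piKronecker (A : ι → Matrix n n R) : Matrix (ι → n) (ι → n) R :=
  of fun f g => ∏ j, A j (f j) (g j)

@[simp]
theorem piKronecker_apply (A : ι → Matrix n n R) (f g : ι → n) :
    piKronecker A f g = ∏ j, A j (f j) (g j) := rfl

theorem piKronecker_mul_piKronecker [DecidableEq ι] [Fintype n] (A B : ι → Matrix n n R) :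
    piKronecker A * piKronecker B = piKronecker (A * B) := by
  ext f g
  simp only [piKronecker_apply, mul_apply, Pi.mul_apply, ← prod_mul_distrib]
  rw [prod_univ_sum, Fintype.piFinset_univ]

theorem conjTranspose_piKronecker [StarRing R] (A : ι → Matrix n n R) :
    (piKronecker A)ᴴ = piKronecker fun j => (A j)ᴴ := by
  ext f g
  simp [conjTranspose_apply]

end piKronecker

section Conjugation

variable {m n R : Type*} [Fintype m] [Fintype n] [CommRing R] [StarRing R]

theorem conj_mul_conj [DecidableEq n] {V : Matrix n n R} (hV : V ∈ unitaryGroup n R)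
    (A B : Matrix n n R) : V * A * Vᴴ * (V * B * Vᴴ) = V * (A * B) * Vᴴ := by
  have hV' : Vᴴ * V = 1 := by rw [← star_eq_conjTranspose, ← mem_unitaryGroup_iff']; exact hV
  simp only [Matrix.mul_assoc]
  rw [← Matrix.mul_assoc Vᴴ, hV', Matrix.one_mul]

theorem conj_mul_of_conj_eq_smul [DecidableEq n] {V : Matrix n n R} (hV : V ∈ unitaryGroup n R)
    {A B : Matrix n n R} {φ ψ : R} (hA : V * A * Vᴴ = φ • A) (hB : V * B * Vᴴ = ψ • B) :
    V * (A * B) * Vᴴ = (φ * ψ) • (A * B) := by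
  rw [← conj_mul_conj hV, hA, hB, Matrix.smul_mul, Matrix.mul_smul, smul_smul]

theorem conj_add_conjTranspose {U T : Matrix n n R} (hT : U * T * Uᴴ = T) :
    U * (T + Tᴴ) * Uᴴ = T + Tᴴ := by
  rw [Matrix.mul_add, Matrix.add_mul, hT]
  congr 1
  conv_rhs => rw [← hT]
  simp only [conjTranspose_mul, conjTranspose_conjTranspose, Matrix.mul_assoc]

theorem kronecker_conj (V A : Matrix m m R) (W B : Matrix n n R) :
    (V ⊗ₖ W) * (A ⊗ₖ B) * (V ⊗ₖ W)ᴴ = (V * A * Vᴴ) ⊗ₖ (W * B * Wᴴ) := by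
  rw [conjTranspose_kronecker, mul_kronecker_mul, mul_kronecker_mul]

theorem kronecker_conj_eq_self_of_conj_eq_smul {V A B : Matrix n n R} {φ ψ : R}
    (hA : V * A * Vᴴ = φ • A) (hB : V * B * Vᴴ = ψ • B) (h : φ * ψ = 1) :
    (V ⊗ₖ V) * (A ⊗ₖ B) * (V ⊗ₖ V)ᴴ = A ⊗ₖ B := by
  rw [kronecker_conj, hA, hB, smul_kronecker, kronecker_smul, smul_smul, h, one_smul]

end Conjugation

end Matrix

theorem kronPow_eq_piKronecker (L : ℕ) (V : Matrix (Fin 3) (Fin 3) ℂ) :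
    kronPow L V = piKronecker fun _ => V := rfl

theorem kronPow_mul_piKronecker_mul_conjTranspose (L : ℕ) (V : Matrix (Fin 3) (Fin 3) ℂ)
    (A : Fin L → Matrix (Fin 3) (Fin 3) ℂ) :
    kronPow L V * piKronecker A * (kronPow L V)ᴴ = piKronecker fun j => V * A j * Vᴴ := by
  rw [kronPow_eq_piKronecker, conjTranspose_piKronecker, piKronecker_mul_piKronecker,
    piKronecker_mul_piKronecker]
  rfl

theorem nextSite_ne {L : ℕ} (hL : 2 ≤ L) (i : Fin L) : nextSite i ≠ i := by
  intro h
  have h' : ((i : ℕ) + 1) % L = i := congrArg Fin.val h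
  rcases Nat.lt_or_ge ((i : ℕ) + 1) L with hlt | hge
  · rw [Nat.mod_eq_of_lt hlt] at h'
    omega
  · rw [show (i : ℕ) + 1 = L by omega, Nat.mod_self] at h'
    omega

theorem embed1_eq_piKronecker (L : ℕ) (M : Matrix (Fin 3) (Fin 3) ℂ) (i : Fin L) :
    embed1 L M i = piKronecker (Function.update 1 i M) := by
  ext f g
  rw [embed1, piKronecker_apply, ← mul_prod_erase _ _ (mem_univ i), ← sdiff_singleton_eq_erase]
  refine congrArg₂ _ (by simp) (prod_congr rfl fun j hj => ?_)
  rw [Function.update_of_ne (by simpa using hj), Pi.one_apply, one_apply]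

theorem embed2_kronecker_eq_piKronecker {L : ℕ} (hL : 2 ≤ L) (A B : Matrix (Fin 3) (Fin 3) ℂ)
    (i : Fin L) :
    embed2 L (A ⊗ₖ B) i
      = piKronecker (Function.update (Function.update 1 (nextSite i) B) i A) := by
  have hne := nextSite_ne hL i
  ext f g
  rw [embed2, piKronecker_apply, ← mul_prod_erase _ _ (mem_univ i),
    ← mul_prod_erase _ _ (mem_erase.2 ⟨hne, mem_univ _⟩), ← mul_assoc]
  refine congrArg₂ _ (by simp [hne]) (prod_congr (by ext; simp [and_comm]) fun j hj => ?_)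
  simp only [mem_erase] at hj
  rw [Function.update_of_ne hj.2.1, Function.update_of_ne hj.1, Pi.one_apply, one_apply]

section LocalOperators

variable {L : ℕ} {V : Matrix (Fin 3) (Fin 3) ℂ}

theorem kronPow_mul_embed1_mul_conjTranspose (hV : V ∈ unitaryGroup (Fin 3) ℂ)
    (M : Matrix (Fin 3) (Fin 3) ℂ) (i : Fin L) :
    kronPow L V * embed1 L M i * (kronPow L V)ᴴ = embed1 L (V * M * Vᴴ) i := by
  simp only [embed1_eq_piKronecker, kronPow_mul_piKronecker_mul_conjTranspose]
  congr 1
  funext j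
  rcases eq_or_ne j i with rfl | hj
  · simp
  · simp [hj, ← star_eq_conjTranspose, mem_unitaryGroup_iff.1 hV]

theorem kronPow_mul_embed2_kronecker_mul_conjTranspose (hL : 2 ≤ L)
    (hV : V ∈ unitaryGroup (Fin 3) ℂ) (A B : Matrix (Fin 3) (Fin 3) ℂ) (i : Fin L) :
    kronPow L V * embed2 L (A ⊗ₖ B) i * (kronPow L V)ᴴ
      = embed2 L ((V * A * Vᴴ) ⊗ₖ (V * B * Vᴴ)) i := by
  simp only [embed2_kronecker_eq_piKronecker hL, kronPow_mul_piKronecker_mul_conjTranspose]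
  congr 1
  funext j
  rcases eq_or_ne j i with rfl | hi
  · simp
  rcases eq_or_ne j (nextSite i) with rfl | hn
  · simp [hi]
  · simp [hi, hn, ← star_eq_conjTranspose, mem_unitaryGroup_iff.1 hV]

theorem embed2_smul (K : Matrix (Fin 3 × Fin 3) (Fin 3 × Fin 3) ℂ) (c : ℂ) (i : Fin L) :
    embed2 L (c • K) i = c • embed2 L K i := by
  ext f g
  simp only [embed2, Matrix.smul_apply, smul_eq_mul, mul_assoc]

theorem embed2_sum {α : Type*} (s : Finset α) (K : α → Matrix (Fin 3 × Fin 3) (Fin 3 × Fin 3) ℂ)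
    (i : Fin L) : embed2 L (∑ x ∈ s, K x) i = ∑ x ∈ s, embed2 L (K x) i := by
  ext f g
  simp only [embed2, Matrix.sum_apply, sum_mul]

theorem kronPow_mul_embed2_mul_conjTranspose (hL : 2 ≤ L) (hV : V ∈ unitaryGroup (Fin 3) ℂ)
    (K : Matrix (Fin 3 × Fin 3) (Fin 3 × Fin 3) ℂ) (i : Fin L) :
    kronPow L V * embed2 L K i * (kronPow L V)ᴴ = embed2 L ((V ⊗ₖ V) * K * (V ⊗ₖ V)ᴴ) i := by
  have hK : K = ∑ p : Fin 3 × Fin 3, ∑ q : Fin 3 × Fin 3,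
      K p q • (single p.1 q.1 1 ⊗ₖ single p.2 q.2 1) := by
    simp only [single_kronecker_single, mul_one, smul_single, smul_eq_mul]
    exact matrix_eq_sum_single K
  rw [hK]
  simp only [embed2_sum, embed2_smul, Matrix.mul_sum, Matrix.sum_mul, Matrix.mul_smul,
    Matrix.smul_mul, kronPow_mul_embed2_kronecker_mul_conjTranspose hL hV, conjTranspose_kronecker,
    ← mul_kronecker_mul]

end LocalOperators

structure FixesHmodelTerms (V : Matrix (Fin 3) (Fin 3) ℂ) : Prop where
  sz_sq : V * (Sz * Sz) * Vᴴ = Sz * Sz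
  sz_kronecker_sz : (V ⊗ₖ V) * (Sz ⊗ₖ Sz) * (V ⊗ₖ V)ᴴ = Sz ⊗ₖ Sz
  ta : (V ⊗ₖ V) * Ta * (V ⊗ₖ V)ᴴ = Ta
  tb : (V ⊗ₖ V) * Tb * (V ⊗ₖ V)ᴴ = Tb
  tc : (V ⊗ₖ V) * Tc * (V ⊗ₖ V)ᴴ = Tc

theorem kronPow_mul_Hmodel_mul_conjTranspose {L : ℕ} (hL : 2 ≤ L) {V : Matrix (Fin 3) (Fin 3) ℂ}
    (hV : V ∈ unitaryGroup (Fin 3) ℂ) (hT : FixesHmodelTerms V) (lam kap Δt a b c : ℝ)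
    (h J : Fin L → ℝ) :
    kronPow L V * Hmodel L lam kap Δt a b c h J * (kronPow L V)ᴴ
      = Hmodel L lam kap Δt a b c h J := by
  have onsite (i : Fin L) :
      kronPow L V * embed1 L (Sz * Sz) i * (kronPow L V)ᴴ = embed1 L (Sz * Sz) i := by
    rw [kronPow_mul_embed1_mul_conjTranspose hV, hT.sz_sq]
  have bond {K} (hK : (V ⊗ₖ V) * K * (V ⊗ₖ V)ᴴ = K) (i : Fin L) :
      kronPow L V * embed2 L K i * (kronPow L V)ᴴ = embed2 L K i := by
    rw [kronPow_mul_embed2_mul_conjTranspose hL hV, hK]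
  simp only [Hmodel, Matrix.mul_add, Matrix.add_mul, Matrix.mul_smul, Matrix.smul_mul,
    Matrix.mul_sum, Matrix.sum_mul, onsite, bond hT.sz_kronecker_sz,
    bond (conj_add_conjTranspose hT.ta), bond (conj_add_conjTranspose hT.tb),
    bond (conj_add_conjTranspose hT.tc)]

theorem fixesHmodelTerms_of_conj_eq_smul {V : Matrix (Fin 3) (Fin 3) ℂ}
    (hV : V ∈ unitaryGroup (Fin 3) ℂ) {φ ψ : ℂ} (hφψ : φ * ψ = 1) (hφ : φ ^ 3 = 1)
    (hz : V * Sz * Vᴴ = Sz) (hp : V * Sp * Vᴴ = φ • Sp) (hm : V * Sm * Vᴴ = ψ • Sm) :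
    FixesHmodelTerms V := by
  have hz' : V * Sz * Vᴴ = (1 : ℂ) • Sz := by rw [hz, one_smul]
  have hpp := conj_mul_of_conj_eq_smul hV hp hp
  have hmm := conj_mul_of_conj_eq_smul hV hm hm
  have hpz := conj_mul_of_conj_eq_smul hV hp hz'
  have hmz := conj_mul_of_conj_eq_smul hV hm hz'
  refine ⟨by rw [← conj_mul_conj hV, hz],
    kronecker_conj_eq_self_of_conj_eq_smul hz' hz' (one_mul 1), ?_, ?_, ?_⟩
  · rw [Ta, Matrix.mul_add, Matrix.add_mul,
      kronecker_conj_eq_self_of_conj_eq_smul hpp hmm (by linear_combination (φ * ψ + 1) * hφψ),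
      kronecker_conj_eq_self_of_conj_eq_smul hmm hpp (by linear_combination (φ * ψ + 1) * hφψ)]
  · rw [Tb, Matrix.mul_add, Matrix.add_mul,
      kronecker_conj_eq_self_of_conj_eq_smul hpz hmz (by linear_combination hφψ),
      kronecker_conj_eq_self_of_conj_eq_smul hmz hpz (by linear_combination hφψ)]
  · rw [Tc, Matrix.mul_add, Matrix.add_mul,
      kronecker_conj_eq_self_of_conj_eq_smul hpp hpz (by linear_combination hφ),
      kronecker_conj_eq_self_of_conj_eq_smul hmm hmz
        (by linear_combination (-ψ ^ 3) * hφ + (φ ^ 2 * ψ ^ 2 + φ * ψ + 1) * hφψ)]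

theorem fixesHmodelTerms_of_spin_flip {V : Matrix (Fin 3) (Fin 3) ℂ}
    (hV : V ∈ unitaryGroup (Fin 3) ℂ)
    (hz : V * Sz * Vᴴ = -Sz) (hp : V * Sp * Vᴴ = -Sm) (hm : V * Sm * Vᴴ = -Sp) :
    FixesHmodelTerms V := by
  have hz' : V * Sz * Vᴴ = (-1 : ℂ) • Sz := by rw [hz, neg_one_smul]
  have conj_mul (A B) := (conj_mul_conj hV A B).symm
  refine ⟨?_, kronecker_conj_eq_self_of_conj_eq_smul hz' hz' (by norm_num), ?_, ?_, ?_⟩ <;>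
    simp only [Ta, Tb, Tc, Matrix.mul_add, Matrix.add_mul, kronecker_conj, conj_mul, hz, hp, hm,
      neg_mul_neg]
  all_goals exact add_comm _ _

theorem Sp_eq : Sp = !![0, 1, 0; 0, 0, 1; 0, 0, 0] := by
  have h2 : ((Real.sqrt 2 : ℝ) : ℂ) ^ 2 = 2 := by norm_cast; simp
  ext i j
  fin_cases i <;> fin_cases j <;> simp [Sp, Sx, Sy] <;> field_simp <;> simp [h2] <;> norm_num

theorem Sm_eq : Sm = !![0, 0, 0; 1, 0, 0; 0, 1, 0] := by
  have h2 : ((Real.sqrt 2 : ℝ) : ℂ) ^ 2 = 2 := by norm_cast; simp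
  ext i j
  fin_cases i <;> fin_cases j <;> simp [Sm, Sx, Sy] <;> field_simp <;> simp [h2] <;> norm_num

theorem omega_pow_three : ω ^ 3 = 1 := by
  simpa [ω] using (Complex.isPrimitiveRoot_exp 3 (by norm_num)).pow_eq_one

theorem omega_mul_conj : ω * (starRingEnd ℂ) ω = 1 := by
  rw [mul_conj, normSq_eq_norm_sq, ω,
    show 2 * Real.pi * I / 3 = ((2 * Real.pi / 3 : ℝ) : ℂ) * I by push_cast; ring,
    norm_exp_ofReal_mul_I]
  simp

theorem Va_mem_unitaryGroup : Va ∈ unitaryGroup (Fin 3) ℂ := by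
  rw [mem_unitaryGroup_iff, star_eq_conjTranspose]
  ext i j
  fin_cases i <;> fin_cases j <;>
    simp [Va, mul_apply, Fin.sum_univ_three, omega_mul_conj, mul_comm ((starRingEnd ℂ) ω)]

theorem Va_conj_Sz : Va * Sz * Vaᴴ = Sz := by
  ext i j
  fin_cases i <;> fin_cases j <;>
    simp [Va, Sz, mul_apply, Fin.sum_univ_three, omega_mul_conj, mul_comm ((starRingEnd ℂ) ω)]

theorem Va_conj_Sp : Va * Sp * Vaᴴ = ω • Sp := by
  rw [Sp_eq]
  ext i j
  fin_cases i <;> fin_cases j <;> simp [Va, mul_apply, Fin.sum_univ_three]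

theorem Va_conj_Sm : Va * Sm * Vaᴴ = (starRingEnd ℂ) ω • Sm := by
  rw [Sm_eq]
  ext i j
  fin_cases i <;> fin_cases j <;> simp [Va, mul_apply, Fin.sum_univ_three]

theorem Vx_mem_unitaryGroup : Vx ∈ unitaryGroup (Fin 3) ℂ := by
  rw [mem_unitaryGroup_iff, star_eq_conjTranspose]
  ext i j
  fin_cases i <;> fin_cases j <;> simp [Vx, mul_apply, Fin.sum_univ_three]

theorem Vx_conj_Sz : Vx * Sz * Vxᴴ = -Sz := by
  ext i j
  fin_cases i <;> fin_cases j <;> simp [Vx, Sz, mul_apply, Fin.sum_univ_three]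

theorem Vx_conj_Sp : Vx * Sp * Vxᴴ = -Sm := by
  rw [Sp_eq, Sm_eq]
  ext i j
  fin_cases i <;> fin_cases j <;> simp [Vx, mul_apply, Fin.sum_univ_three]

theorem Vx_conj_Sm : Vx * Sm * Vxᴴ = -Sp := by
  rw [Sp_eq, Sm_eq]
  ext i j
  fin_cases i <;> fin_cases j <;> simp [Vx, mul_apply, Fin.sum_univ_three]

/-- for every `L ≥ 2`, all real parameters `λ, κ, Δ_t, a, b, c` and all
real couplings `h_i`, `J_i`, the Hamiltonian `H(λ,κ)` satisfies
`U(g) H(λ,κ) U(g)* = H(λ,κ)` for `U(g) = V(g)^{⊗L}`, `g = a, x` (and hence for all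
`g ∈ S₃`). -/
theorem Hmodel_S3_invariant (L : ℕ) (hL : 2 ≤ L)
    (lam kap Δt a b c : ℝ) (h J : Fin L → ℝ) :
    kronPow L Va * Hmodel L lam kap Δt a b c h J * (kronPow L Va)ᴴ
        = Hmodel L lam kap Δt a b c h J
    ∧ kronPow L Vx * Hmodel L lam kap Δt a b c h J * (kronPow L Vx)ᴴ
        = Hmodel L lam kap Δt a b c h J := by
  have hVa : FixesHmodelTerms Va :=
    fixesHmodelTerms_of_conj_eq_smul Va_mem_unitaryGroup omega_mul_conj omega_pow_three
      Va_conj_Sz Va_conj_Sp Va_conj_Sm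
  have hVx : FixesHmodelTerms Vx :=
    fixesHmodelTerms_of_spin_flip Vx_mem_unitaryGroup Vx_conj_Sz Vx_conj_Sp Vx_conj_Sm
  exact ⟨kronPow_mul_Hmodel_mul_conjTranspose hL Va_mem_unitaryGroup hVa lam kap Δt a b c h J,
    kronPow_mul_Hmodel_mul_conjTranspose hL Vx_mem_unitaryGroup hVx lam kap Δt a b c h J⟩
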